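/- arXiv:0912.5252 — 3 statements merged into one kernel-verified Lean document; each statement's English description precedes it below -/
import Mathlib

section
/- Let f : ℝ² → ℝ be nonnegative and integrable with ∫ (√(1+|v|²) - v₁) f(v) dv = σ₋ and ∫ √(1+|v|²) f(v) dv = k (both finite). Then ∫ f(v) dv ≤ 3 √(σ₋ · k). -/
open MeasureTheory

lemma key_ineq (t x y : ℝ) (ht : 0 < t) :
    1 ≤ t * (Real.sqrt (1 + (x ^ 2 + y ^ 2)) - x) + Real.sqrt (1 + (x ^ 2 + y ^ 2)) * t⁻¹ := by
  set s := Real.sqrt (1 + (x ^ 2 + y ^ 2)) with hs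
  have hnn : (0:ℝ) ≤ 1 + (x ^ 2 + y ^ 2) := by positivity
  have hs2 : s ^ 2 = 1 + (x ^ 2 + y ^ 2) := Real.sq_sqrt hnn
  have hs1 : 1 ≤ s := by
    calc (1:ℝ) = Real.sqrt 1 := Real.sqrt_one.symm
      _ ≤ s := Real.sqrt_le_sqrt (by nlinarith)
  have h1 : t ≤ t ^ 2 * (s - x) + s := by
    nlinarith [sq_nonneg (s - x), sq_nonneg (t - s), sq_nonneg y, mul_pos ht ht]
  have h2 : 1 ≤ (t ^ 2 * (s - x) + s) / t := (one_le_div ht).mpr h1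
  calc 1 ≤ (t ^ 2 * (s - x) + s) / t := h2
    _ = t * (s - x) + s * t⁻¹ := by field_simp

lemma sub_pos' (x y : ℝ) : 0 < Real.sqrt (1 + (x ^ 2 + y ^ 2)) - x := by
  have h : |x| < Real.sqrt (1 + (x ^ 2 + y ^ 2)) := by
    rw [← Real.sqrt_sq_eq_abs]
    exact Real.sqrt_lt_sqrt (sq_nonneg x) (by nlinarith [sq_nonneg y])
  have := le_abs_self x
  linarith

theorem stmt_2 (f : ℝ × ℝ → ℝ) (hf : ∀ v, 0 ≤ f v) (hint : Integrable f)
    (σm k : ℝ)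
    (hσint : Integrable (fun v : ℝ × ℝ =>
      (Real.sqrt (1 + (v.1 ^ 2 + v.2 ^ 2)) - v.1) * f v))
    (hkint : Integrable (fun v : ℝ × ℝ => Real.sqrt (1 + (v.1 ^ 2 + v.2 ^ 2)) * f v))
    (hσ : ∫ v : ℝ × ℝ, (Real.sqrt (1 + (v.1 ^ 2 + v.2 ^ 2)) - v.1) * f v = σm)
    (hk : ∫ v : ℝ × ℝ, Real.sqrt (1 + (v.1 ^ 2 + v.2 ^ 2)) * f v = k) :
    ∫ v, f v ≤ 3 * Real.sqrt (σm * k) := by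
  have hgnn : ∀ v : ℝ × ℝ, 0 ≤ (Real.sqrt (1 + (v.1 ^ 2 + v.2 ^ 2)) - v.1) * f v :=
    fun v => mul_nonneg (sub_pos' v.1 v.2).le (hf v)
  have hs1 : ∀ v : ℝ × ℝ, 1 ≤ Real.sqrt (1 + (v.1 ^ 2 + v.2 ^ 2)) := by
    intro v
    calc (1:ℝ) = Real.sqrt 1 := Real.sqrt_one.symm
      _ ≤ _ := Real.sqrt_le_sqrt (by nlinarith [sq_nonneg v.1, sq_nonneg v.2])
  have hσ0 : 0 ≤ σm := hσ ▸ integral_nonneg hgnn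
  have hk0 : 0 ≤ k := hk ▸ integral_nonneg fun v =>
    mul_nonneg (by positivity) (hf v)
  -- case k = 0
  rcases eq_or_lt_of_le hk0 with hk0' | hkpos
  · have : ∫ v, f v ≤ ∫ v : ℝ × ℝ, Real.sqrt (1 + (v.1 ^ 2 + v.2 ^ 2)) * f v :=
      integral_mono hint hkint fun v => le_mul_of_one_le_left (hf v) (hs1 v)
    rw [hk] at this
    have h3 : (0:ℝ) ≤ 3 * Real.sqrt (σm * k) := by positivity
    linarith
  rcases eq_or_lt_of_le hσ0 with hσ0' | hσpos
  · -- σm = 0 : f = 0 a.e.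
    have hg0 : (fun v : ℝ × ℝ => (Real.sqrt (1 + (v.1 ^ 2 + v.2 ^ 2)) - v.1) * f v)
        =ᵐ[volume] 0 := by
      rw [← integral_eq_zero_iff_of_nonneg hgnn hσint]
      rw [hσ, ← hσ0']
    have hf0 : f =ᵐ[volume] 0 := by
      filter_upwards [hg0] with v hv
      have hp := sub_pos' v.1 v.2
      have hv' : (Real.sqrt (1 + (v.1 ^ 2 + v.2 ^ 2)) - v.1) * f v = 0 := hv
      have : f v = 0 := by
        rcases mul_eq_zero.mp hv' with h | h
        · exact absurd h (ne_of_gt hp)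
        · exact h
      simpa using this
    rw [integral_eq_zero_of_ae hf0]
    positivity
  · -- main case
    set t : ℝ := Real.sqrt k / Real.sqrt σm with htdef
    have hsσ : 0 < Real.sqrt σm := Real.sqrt_pos.mpr hσpos
    have hsk : 0 < Real.sqrt k := Real.sqrt_pos.mpr hkpos
    have ht : 0 < t := div_pos hsk hsσ
    have hpt : ∀ v : ℝ × ℝ, f v ≤
        t * ((Real.sqrt (1 + (v.1 ^ 2 + v.2 ^ 2)) - v.1) * f v)
        + t⁻¹ * (Real.sqrt (1 + (v.1 ^ 2 + v.2 ^ 2)) * f v) := by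
      intro v
      have := key_ineq t v.1 v.2 ht
      nlinarith [hf v, mul_le_mul_of_nonneg_right this (hf v)]
    have hI : Integrable (fun v : ℝ × ℝ =>
        t * ((Real.sqrt (1 + (v.1 ^ 2 + v.2 ^ 2)) - v.1) * f v)
        + t⁻¹ * (Real.sqrt (1 + (v.1 ^ 2 + v.2 ^ 2)) * f v)) :=
      (hσint.const_mul t).add (hkint.const_mul t⁻¹)
    have hmono : ∫ v, f v ≤ ∫ v : ℝ × ℝ,
        (t * ((Real.sqrt (1 + (v.1 ^ 2 + v.2 ^ 2)) - v.1) * f v)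
        + t⁻¹ * (Real.sqrt (1 + (v.1 ^ 2 + v.2 ^ 2)) * f v)) :=
      integral_mono hint hI hpt
    rw [integral_add (hσint.const_mul t) (hkint.const_mul t⁻¹),
      integral_const_mul, integral_const_mul, hσ, hk] at hmono
    have hmm : Real.sqrt σm * Real.sqrt k = Real.sqrt (σm * k) :=
      (Real.sqrt_mul hσ0 k).symm
    have e1 : t * σm = Real.sqrt σm * Real.sqrt k := by
      rw [htdef]
      field_simp
      nlinarith [Real.mul_self_sqrt hσ0]
    have e2 : t⁻¹ * k = Real.sqrt σm * Real.sqrt k := by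
      rw [htdef, inv_div]
      field_simp
      nlinarith [Real.mul_self_sqrt hk0]
    rw [e1, e2, hmm] at hmono
    have : 0 ≤ Real.sqrt (σm * k) := Real.sqrt_nonneg _
    linarith
end

section
/- Suppose E : [0,T] × ℝ → ℝ is C¹, x ↦ E(t,x) is nondecreasing for each t, and (X,V) : [0,T] → ℝ² solves Ẋ(s) = V(s)/√(1+V(s)²+c²), V̇(s) = E(s,X(s)) with final conditions X(t)=x, V(t)=v₁ at time t ∈ (0,T]. Let (∂X/∂v₁, ∂V/∂v₁) denote derivatives of the solution with respect to the final momentum v₁. Then ∂V/∂v₁(s) ≥ 1 and ∂X/∂v₁(s) < 0 for all 0 ≤ s < t. -/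
open Set

private lemma mono_deriv_nonneg {f : ℝ → ℝ} (hf : Monotone f) (x : ℝ) : 0 ≤ deriv f x := by
  by_cases h : DifferentiableAt ℝ f x
  · have hd := h.hasDerivAt
    rw [hasDerivAt_iff_tendsto_slope] at hd
    have h2 : Filter.Tendsto (slope f x) (nhdsWithin x (Ioi x)) (nhds (deriv f x)) :=
      hd.mono_left (nhdsWithin_mono x (fun y hy => ne_of_gt hy))
    refine ge_of_tendsto h2 ?_
    filter_upwards [self_mem_nhdsWithin] with y hy
    rw [slope_def_field]
    exact div_nonneg (sub_nonneg.2 (hf (le_of_lt hy))) (sub_nonneg.2 (le_of_lt hy))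
  · simp [deriv_zero_of_not_differentiableAt h]

theorem stmt_15 (T t c : ℝ) (hT : 0 < T) (htmem : t ∈ Ioc 0 T)
    (E : ℝ → ℝ → ℝ)
    (hE : ContDiff ℝ 1 fun p : ℝ × ℝ => E p.1 p.2)
    (hEmono : ∀ s, Monotone (E s))
    (X V Xv Vv : ℝ → ℝ) (x v₁ : ℝ)
    (hX : ∀ s ∈ Icc 0 T, HasDerivAt X (V s / Real.sqrt (1 + V s ^ 2 + c ^ 2)) s)
    (hV : ∀ s ∈ Icc 0 T, HasDerivAt V (E s (X s)) s)
    (hXt : X t = x) (hVt : V t = v₁)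
    (hXv : ∀ s ∈ Icc 0 T, HasDerivAt Xv
      ((1 + c ^ 2) * (1 + V s ^ 2 + c ^ 2) ^ (-(3 : ℝ) / 2) * Vv s) s)
    (hVv : ∀ s ∈ Icc 0 T, HasDerivAt Vv (deriv (E s) (X s) * Xv s) s)
    (hXvt : Xv t = 0) (hVvt : Vv t = 1) :
    ∀ s ∈ Ico 0 t, 1 ≤ Vv s ∧ Xv s < 0 := by
  obtain ⟨ht0, htT⟩ := htmem
  set a : ℝ → ℝ := fun s => (1 + c ^ 2) * (1 + V s ^ 2 + c ^ 2) ^ (-(3 : ℝ) / 2) with ha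
  have hbase : ∀ s, 0 < 1 + V s ^ 2 + c ^ 2 := fun s => by positivity
  have hapos : ∀ s, 0 < a s := fun s =>
    mul_pos (by positivity) (Real.rpow_pos_of_pos (hbase s) _)
  have hb : ∀ s, 0 ≤ deriv (E s) (X s) := fun s => mono_deriv_nonneg (hEmono s) _
  -- the set C
  set C : Set ℝ := {s | s ∈ Icc 0 t ∧ ∀ u ∈ Icc s t, 1 ≤ Vv u ∧ Xv u ≤ 0} with hC
  have htC : t ∈ C := by
    refine ⟨⟨le_of_lt ht0, le_rfl⟩, fun u hu => ?_⟩
    have : u = t := le_antisymm hu.2 hu.1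
    rw [this, hVvt, hXvt]
    exact ⟨le_rfl, le_rfl⟩
  have hne : C.Nonempty := ⟨t, htC⟩
  have hbdd : BddBelow C := ⟨0, fun s hs => hs.1.1⟩
  set r := sInf C with hrdef
  have hr0 : 0 ≤ r := le_csInf hne fun s hs => hs.1.1
  have hrt : r ≤ t := csInf_le hbdd htC
  have hrT : r ∈ Icc (0 : ℝ) T := ⟨hr0, le_trans hrt htT⟩
  have hmid : ∀ u, r < u → u ≤ t → 1 ≤ Vv u ∧ Xv u ≤ 0 := by
    intro u hru hut
    obtain ⟨s, hsC, hsu⟩ := exists_lt_of_csInf_lt hne hru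
    exact hsC.2 u ⟨le_of_lt hsu, hut⟩
  have hDr : 1 ≤ Vv r ∧ Xv r ≤ 0 := by
    rcases eq_or_lt_of_le hrt with hrt' | hrt'
    · rw [hrt', hVvt, hXvt]; exact ⟨le_rfl, le_rfl⟩
    · have hVvc : Filter.Tendsto Vv (nhdsWithin r (Ioi r)) (nhds (Vv r)) :=
        ((hVv r hrT).continuousAt).continuousWithinAt.tendsto
      have hXvc : Filter.Tendsto Xv (nhdsWithin r (Ioi r)) (nhds (Xv r)) :=
        ((hXv r hrT).continuousAt).continuousWithinAt.tendsto
      have hmem : Ioc r t ∈ nhdsWithin r (Ioi r) := Ioc_mem_nhdsGT_of_mem ⟨le_rfl, hrt'⟩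
      constructor
      · refine ge_of_tendsto hVvc ?_
        filter_upwards [hmem] with u hu
        exact (hmid u hu.1 hu.2).1
      · refine le_of_tendsto hXvc ?_
        filter_upwards [hmem] with u hu
        exact (hmid u hu.1 hu.2).2
  have hreq : r = 0 := by
    by_contra hne0
    have hrpos : 0 < r := lt_of_le_of_ne hr0 (Ne.symm hne0)
    -- g = a * Vv is continuous at r and positive there
    set g : ℝ → ℝ := fun s => a s * Vv s with hg
    have hgc : ContinuousAt g r := by
      have hVc : ContinuousAt V r := (hV r hrT).continuousAt
      have hVvc : ContinuousAt Vv r := (hVv r hrT).continuousAt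
      have hbc : ContinuousAt (fun s => 1 + V s ^ 2 + c ^ 2) r := by fun_prop
      have hcomp : ContinuousAt (fun s => (1 + V s ^ 2 + c ^ 2) ^ (-(3 : ℝ) / 2)) r :=
        hbc.rpow_const (Or.inl (hbase r).ne')
      exact (continuousAt_const.mul hcomp).mul hVvc
    have hgr : 0 < g r :=
      mul_pos (hapos r) (lt_of_lt_of_le one_pos hDr.1)
    have hnb : g ⁻¹' (Ioi 0) ∈ nhds r := hgc.preimage_mem_nhds (Ioi_mem_nhds hgr)
    obtain ⟨ε, hε, hball⟩ := Metric.mem_nhds_iff.1 hnb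
    set r' := max (r - ε / 2) 0 with hr'
    have hr'r : r' < r := by
      apply max_lt (by linarith) hrpos
    have hr'0 : 0 ≤ r' := le_max_right _ _
    have hIsub : Icc r' r ⊆ Icc (0 : ℝ) T :=
      Icc_subset_Icc hr'0 (le_trans hrt htT)
    have hIball : ∀ u ∈ Icc r' r, 0 < g u := by
      intro u hu
      apply hball
      rw [Metric.mem_ball, Real.dist_eq, abs_sub_lt_iff]
      have h1 : r - ε / 2 ≤ r' := le_max_left _ _
      constructor <;> [linarith [hu.2, hε]; linarith [hu.1, hε, h1]]
    -- Xv strictly increasing on [r', r]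
    have hXvmono : StrictMonoOn Xv (Icc r' r) := by
      apply strictMonoOn_of_deriv_pos (convex_Icc _ _)
      · exact fun u hu => ((hXv u (hIsub hu)).continuousAt).continuousWithinAt
      · intro u hu
        rw [interior_Icc] at hu
        rw [(hXv u (hIsub (Ioo_subset_Icc_self hu))).deriv]
        exact hIball u (Ioo_subset_Icc_self hu)
    have hXvle : ∀ u ∈ Icc r' r, Xv u ≤ 0 := by
      intro u hu
      rcases eq_or_lt_of_le hu.2 with h | h
      · rw [h]; exact hDr.2
      · exact le_trans (le_of_lt (hXvmono hu (right_mem_Icc.2 (le_of_lt hr'r)) h)) hDr.2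
    -- Vv antitone on [r', r]
    have hVvanti : AntitoneOn Vv (Icc r' r) := by
      apply antitoneOn_of_deriv_nonpos (convex_Icc _ _)
      · exact fun u hu => ((hVv u (hIsub hu)).continuousAt).continuousWithinAt
      · intro u hu
        rw [interior_Icc] at hu
        exact ((hVv u (hIsub (Ioo_subset_Icc_self hu))).differentiableAt).differentiableWithinAt
      · intro u hu
        rw [interior_Icc] at hu
        rw [(hVv u (hIsub (Ioo_subset_Icc_self hu))).deriv]
        exact mul_nonpos_of_nonneg_of_nonpos (hb u) (hXvle u (Ioo_subset_Icc_self hu))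
    have hVvge : ∀ u ∈ Icc r' r, 1 ≤ Vv u := by
      intro u hu
      exact le_trans hDr.1 (hVvanti hu (right_mem_Icc.2 (le_of_lt hr'r)) hu.2)
    have hr'C : r' ∈ C := by
      refine ⟨⟨hr'0, le_trans (le_of_lt hr'r) hrt⟩, fun u hu => ?_⟩
      rcases le_or_gt u r with h | h
      · exact ⟨hVvge u ⟨hu.1, h⟩, hXvle u ⟨hu.1, h⟩⟩
      · exact hmid u h hu.2
    exact absurd (csInf_le hbdd hr'C) (not_le.2 hr'r)
  -- conclusion
  have hAll : ∀ u ∈ Icc (0 : ℝ) t, 1 ≤ Vv u ∧ Xv u ≤ 0 := by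
    intro u hu
    rcases eq_or_lt_of_le hu.1 with h | h
    · rw [← h]; rw [hreq] at hDr; exact hDr
    · exact hmid u (hreq ▸ h) hu.2
  have hXvmono : StrictMonoOn Xv (Icc 0 t) := by
    apply strictMonoOn_of_deriv_pos (convex_Icc _ _)
    · intro u hu
      exact ((hXv u (Icc_subset_Icc le_rfl htT hu)).continuousAt).continuousWithinAt
    · intro u hu
      rw [interior_Icc] at hu
      have hu' : u ∈ Icc (0 : ℝ) T := Icc_subset_Icc le_rfl htT (Ioo_subset_Icc_self hu)
      rw [(hXv u hu').deriv]
      exact mul_pos (hapos u)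
        (lt_of_lt_of_le one_pos (hAll u (Ioo_subset_Icc_self hu)).1)
  intro s hs
  refine ⟨(hAll s ⟨hs.1, le_of_lt hs.2⟩).1, ?_⟩
  have := hXvmono ⟨hs.1, le_of_lt hs.2⟩ (right_mem_Icc.2 (le_of_lt ht0)) hs.2
  rwa [hXvt] at this
end

section
/- Let e, m : [0,T] × ℝ → ℝ be C¹ functions with ∂_t e + ∂_x m = 0, e ± m ≥ 0 pointwise, and ∫_ℝ e(t,y) dy = ∫_ℝ e(0,y) dy < ∞ for all t (with e(t,·) integrable). Then for every x ∈ ℝ and T > 0: ∫_0^T (e - m)(t, x+t) dt + ∫_0^T (e + m)(t, x-t) dt = ∫_{x-T}^{x+T} e(T,y) dy; in particular each of ∫_0^T (e ∓ m)(t, x±t) dt is bounded by ∫ e(0,y) dy uniformly in T. -/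
open MeasureTheory intervalIntegral Function

/-!
Local energy conservation on the backward light cone: the energy inside the cone,
`Φ(t) = ∫_{x-t}^{x+t} e(t, y) dy = ∫₀ᵗ (e(t, x+u) + e(t, x-u)) du`, has derivative
`(e - m)(t, x+t) + (e + m)(t, x-t)` because `∂ₜe = -∂ₓm` turns the bulk term into the boundary
values of `m`. Integrating from `0` to `T` gives the flux identity; both fluxes are nonnegative
since `e ± m ≥ 0`, and each is bounded by `∫_{x-T}^{x+T} e(T, ·) ≤ ∫ e(T, ·) = ∫ e(0, ·)`.
-/

section Leibniz

variable {E : Type*} [NormedAddCommGroup E] [NormedSpace ℝ E] {g g' : ℝ → ℝ → E}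

theorem hasDerivAt_intervalIntegral_of_continuous_deriv (hg : ∀ t, Continuous (g t))
    (hg' : Continuous (uncurry g')) (hd : ∀ t u, HasDerivAt (fun τ => g τ u) (g' t u) t)
    (a b t₀ : ℝ) :
    HasDerivAt (fun t => ∫ u in a..b, g t u) (∫ u in a..b, g' t₀ u) t₀ := by
  obtain ⟨C, hC⟩ := ((isCompact_closedBall t₀ 1).prod isCompact_uIcc).exists_bound_of_continuousOn
    (hg'.continuousOn (s := Metric.closedBall t₀ 1 ×ˢ Set.uIcc a b))
  refine (hasDerivAt_integral_of_dominated_loc_of_deriv_le (bound := fun _ => C)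
    (Metric.ball_mem_nhds t₀ one_pos) (.of_forall fun t => (hg t).aestronglyMeasurable)
    ((hg t₀).intervalIntegrable _ _) (hg'.uncurry_left t₀).aestronglyMeasurable
    (.of_forall fun u hu t ht => hC (t, u) ⟨Metric.ball_subset_closedBall ht,
      Set.uIoc_subset_uIcc hu⟩) intervalIntegrable_const
    (.of_forall fun u _ t _ => hd t u)).2

theorem hasDerivAt_intervalIntegral_self_of_continuousAt [CompleteSpace E]
    (hg : ∀ t, Continuous (g t)) {t₀ : ℝ} (hc : ContinuousAt (uncurry g) (t₀, t₀)) :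
    HasDerivAt (fun t => ∫ u in t₀..t, g t u) (g t₀ t₀) t₀ := by
  rw [hasDerivAt_iff_isLittleO, Asymptotics.isLittleO_iff]
  intro ε hε
  obtain ⟨δ, hδ, hclose⟩ := Metric.continuousAt_iff.mp hc ε hε
  filter_upwards [Metric.ball_mem_nhds t₀ hδ] with t ht
  rw [Metric.mem_ball, Real.dist_eq] at ht
  have hbound : ∀ u ∈ Set.uIoc t₀ t, ‖g t u - g t₀ t₀‖ ≤ ε := by
    intro u hu
    have hu' : |u - t₀| ≤ |t - t₀| := Set.abs_sub_left_of_mem_uIcc (Set.uIoc_subset_uIcc hu)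
    rw [← dist_eq_norm]
    refine (hclose (x := (t, u)) ?_).le
    rw [Prod.dist_eq, Real.dist_eq, Real.dist_eq]
    exact max_lt ht (hu'.trans_lt ht)
  calc ‖(∫ u in t₀..t, g t u) - (∫ u in t₀..t₀, g t₀ u) - (t - t₀) • g t₀ t₀‖
      = ‖∫ u in t₀..t, (g t u - g t₀ t₀)‖ := by
        rw [integral_same, sub_zero, integral_sub ((hg t).intervalIntegrable _ _)
          intervalIntegrable_const, intervalIntegral.integral_const]
    _ ≤ ε * |t - t₀| := norm_integral_le_of_norm_le_const hbound
    _ = ε * ‖t - t₀‖ := by rw [Real.norm_eq_abs]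

theorem hasDerivAt_intervalIntegral_param_upper [CompleteSpace E] (hg : Continuous (uncurry g))
    (hg' : Continuous (uncurry g')) (hd : ∀ t u, HasDerivAt (fun τ => g τ u) (g' t u) t)
    (a t₀ : ℝ) :
    HasDerivAt (fun t => ∫ u in a..t, g t u) ((∫ u in a..t₀, g' t₀ u) + g t₀ t₀) t₀ := by
  have hsplit : (fun t => ∫ u in a..t, g t u)
      = fun t => (∫ u in a..t₀, g t u) + ∫ u in t₀..t, g t u := by
    funext t
    exact (integral_add_adjacent_intervals ((hg.uncurry_left t).intervalIntegrable _ _)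
      ((hg.uncurry_left t).intervalIntegrable _ _)).symm
  rw [hsplit]
  exact (hasDerivAt_intervalIntegral_of_continuous_deriv hg.uncurry_left hg' hd a t₀ t₀).add
    (hasDerivAt_intervalIntegral_self_of_continuousAt hg.uncurry_left hg.continuousAt)

end Leibniz

section PartialDeriv

variable {F : Type*} [NormedAddCommGroup F] [NormedSpace ℝ F] {f : ℝ → ℝ → F}

theorem ContDiff.hasDerivAt_uncurry_fst (hf : ContDiff ℝ 1 (uncurry f)) (t y : ℝ) :
    HasDerivAt (fun τ => f τ y) (fderiv ℝ (uncurry f) (t, y) (1, 0)) t := by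
  have hline : HasDerivAt (fun τ : ℝ => (τ, y)) ((1 : ℝ), (0 : ℝ)) t :=
    (hasDerivAt_id' t).prodMk (hasDerivAt_const t y)
  exact (hf.differentiable one_ne_zero (t, y)).hasFDerivAt.comp_hasDerivAt t hline

theorem ContDiff.hasDerivAt_uncurry_snd (hf : ContDiff ℝ 1 (uncurry f)) (t y : ℝ) :
    HasDerivAt (f t) (fderiv ℝ (uncurry f) (t, y) (0, 1)) y := by
  have hline : HasDerivAt (fun z : ℝ => (t, z)) ((0 : ℝ), (1 : ℝ)) y :=
    (hasDerivAt_const y t).prodMk (hasDerivAt_id' y)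
  exact (hf.differentiable one_ne_zero (t, y)).hasFDerivAt.comp_hasDerivAt y hline

theorem ContDiff.continuous_deriv_uncurry_snd (hf : ContDiff ℝ 1 (uncurry f)) :
    Continuous fun p : ℝ × ℝ => deriv (f p.1) p.2 := by
  simp only [(hf.hasDerivAt_uncurry_snd _ _).deriv]
  exact (hf.continuous_fderiv one_ne_zero).clm_apply continuous_const

end PartialDeriv

theorem integral_add_reflect_eq_integral {E : Type*} [NormedAddCommGroup E] [NormedSpace ℝ E]
    {f : ℝ → E} (hf : Continuous f) (x T : ℝ) :
    ∫ u in (0:ℝ)..T, (f (x + u) + f (x - u)) = ∫ y in (x - T)..(x + T), f y := by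
  have hright : Continuous fun u => f (x + u) := by fun_prop
  have hleft : Continuous fun u => f (x - u) := by fun_prop
  rw [integral_add (hright.intervalIntegrable _ _) (hleft.intervalIntegrable _ _),
    integral_comp_add_left, integral_comp_sub_left, add_zero, sub_zero, add_comm,
    integral_add_adjacent_intervals (hf.intervalIntegrable _ _) (hf.intervalIntegrable _ _)]

section ConservationLaw

variable {e m : ℝ → ℝ → ℝ}

theorem hasDerivAt_integral_cone (he : ContDiff ℝ 1 (uncurry e)) (hm : ContDiff ℝ 1 (uncurry m))
    (hpde : ∀ t x : ℝ, deriv (fun τ => e τ x) t + deriv (fun y => m t y) x = 0) (x t₀ : ℝ) :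
    HasDerivAt (fun t => ∫ u in (0:ℝ)..t, (e t (x + u) + e t (x - u)))
      ((e t₀ (x + t₀) - m t₀ (x + t₀)) + (e t₀ (x - t₀) + m t₀ (x - t₀))) t₀ := by
  set mx : ℝ → ℝ → ℝ := fun t y => deriv (m t) y
  have hmx : ∀ t y, HasDerivAt (m t) (mx t y) y := fun t y =>
    (hm.hasDerivAt_uncurry_snd t y).differentiableAt.hasDerivAt
  have het : ∀ t y, HasDerivAt (fun τ => e τ y) (-mx t y) t := fun t y => by
    rw [← eq_neg_of_add_eq_zero_left (hpde t y)]
    exact (he.hasDerivAt_uncurry_fst t y).differentiableAt.hasDerivAt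
  have hmx_cont : Continuous (uncurry mx) := hm.continuous_deriv_uncurry_snd
  -- `u ↦ m t₀ (x + u) - m t₀ (x - u)` is a primitive of the bulk term.
  have hflux : ∫ u in (0:ℝ)..t₀, -(mx t₀ (x + u) + mx t₀ (x - u))
      = -(m t₀ (x + t₀) - m t₀ (x - t₀)) := by
    rw [intervalIntegral.integral_neg,
      integral_eq_sub_of_hasDerivAt (f := fun u => m t₀ (x + u) - m t₀ (x - u))]
    · simp
    · intro u _
      rw [← sub_neg_eq_add]
      exact ((hmx t₀ _).comp_const_add x u).sub ((hmx t₀ _).comp_const_sub x u)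
    · have hbulk : Continuous fun u => mx t₀ (x + u) + mx t₀ (x - u) := by fun_prop
      exact hbulk.intervalIntegrable _ _
  have h := hasDerivAt_intervalIntegral_param_upper (g := fun t u => e t (x + u) + e t (x - u))
    (g' := fun t u => -(mx t (x + u) + mx t (x - u))) (by fun_prop) (by fun_prop)
    (fun t u => by rw [neg_add]; exact (het t (x + u)).add (het t (x - u))) 0 t₀
  exact h.congr_deriv (by rw [hflux]; ring)

theorem integral_flux_add_integral_flux (he : ContDiff ℝ 1 (uncurry e))
    (hm : ContDiff ℝ 1 (uncurry m))
    (hpde : ∀ t x : ℝ, deriv (fun τ => e τ x) t + deriv (fun y => m t y) x = 0) (x T : ℝ) :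
    (∫ t in (0:ℝ)..T, (e t (x + t) - m t (x + t))) +
        (∫ t in (0:ℝ)..T, (e t (x - t) + m t (x - t))) =
      ∫ y in (x - T)..(x + T), e T y := by
  have hout : Continuous fun t => e t (x + t) - m t (x + t) := by fun_prop
  have hin : Continuous fun t => e t (x - t) + m t (x - t) := by fun_prop
  rw [← integral_add (hout.intervalIntegrable _ _) (hin.intervalIntegrable _ _),
    integral_eq_sub_of_hasDerivAt (fun t _ => hasDerivAt_integral_cone he hm hpde x t)
      ((hout.add hin).intervalIntegrable _ _),
    integral_same, sub_zero, integral_add_reflect_eq_integral (by fun_prop) x T]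

end ConservationLaw

theorem stmt_17 (T : ℝ) (hT : 0 < T) (e m : ℝ → ℝ → ℝ)
    (he : ContDiff ℝ 1 fun p : ℝ × ℝ => e p.1 p.2)
    (hm : ContDiff ℝ 1 fun p : ℝ × ℝ => m p.1 p.2)
    (hpde : ∀ t x : ℝ, deriv (fun τ => e τ x) t + deriv (fun y => m t y) x = 0)
    (hpos : ∀ t x : ℝ, 0 ≤ e t x + m t x ∧ 0 ≤ e t x - m t x)
    (hint : ∀ t : ℝ, Integrable (e t))
    (hcons : ∀ t : ℝ, ∫ y, e t y = ∫ y, e 0 y) :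
    ∀ x : ℝ,
      ((∫ t in (0:ℝ)..T, (e t (x + t) - m t (x + t))) +
          (∫ t in (0:ℝ)..T, (e t (x - t) + m t (x - t))) =
        ∫ y in (x - T)..(x + T), e T y) ∧
      ((∫ t in (0:ℝ)..T, (e t (x + t) - m t (x + t))) ≤ ∫ y, e 0 y) ∧
      ((∫ t in (0:ℝ)..T, (e t (x - t) + m t (x - t))) ≤ ∫ y, e 0 y) := by
  intro x
  have hflux := integral_flux_add_integral_flux he hm hpde x T
  have hcone : ∫ y in (x - T)..(x + T), e T y ≤ ∫ y, e 0 y := by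
    rw [← hcons T, integral_of_le (by linarith)]
    have he_nonneg : 0 ≤ e T := fun y => show 0 ≤ e T y by linarith [hpos T y]
    exact setIntegral_le_integral (hint T) (.of_forall he_nonneg)
  have hout : 0 ≤ ∫ t in (0:ℝ)..T, (e t (x + t) - m t (x + t)) :=
    integral_nonneg hT.le fun t _ => (hpos t _).2
  have hin : 0 ≤ ∫ t in (0:ℝ)..T, (e t (x - t) + m t (x - t)) :=
    integral_nonneg hT.le fun t _ => (hpos t _).1
  exact ⟨hflux, by linarith, by linarith⟩
end
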